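/- Let M be a non-faithful left module over a principal ideal domain R with Ann_R(M) = ⟨a⟩, a ≠ 0, and let a = u·p₁^{α₁}⋯p_n^{α_n} be its factorization into distinct primes p₁,…,p_n (u a unit, each α_i ≥ 1). Then M is the internal direct sum of the submodules Ann_M(p_i^{α_i}), i = 1,…,n, and M has a proper essential submodule if and only if Ann_M(p_i^{α_i}) has a proper essential submodule for some i. -/

import Mathlib

/-!
Since `u` is a unit, `M` is killed by `∏ pᵢ^{αᵢ}`, and distinct primes of a PID have pairwise
coprime powers, so `M` is the internal direct sum of the `Ann_M(pᵢ^{αᵢ})`. The statement about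
essential submodules holds for any internal direct sum `M = ⨁ Nᵢ`: a proper essential `E ≤ M`
misses some `Nᵢ`, and then `E ∩ Nᵢ` is proper essential in `Nᵢ`; conversely, the preimage of a
proper essential `E ≤ Nᵢ` under the projection of `M` onto `Nᵢ` is proper essential in `M`.
-/

/-- `E` is a proper essential submodule of `M`: a proper nontrivial submodule that
intersects every nonzero submodule nontrivially. -/
def IsProperEssential {R M : Type*} [Ring R] [AddCommGroup M] [Module R M]
    (E : Submodule R M) : Prop :=
  E ≠ ⊥ ∧ E ≠ ⊤ ∧ ∀ N : Submodule R M, N ≠ ⊥ → E ⊓ N ≠ ⊥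

open scoped Function

section Essential

variable {R M M' : Type*} [Ring R] [AddCommGroup M] [Module R M] [AddCommGroup M'] [Module R M']

theorem Submodule.comap_inf_ne_bot_of_forall_inf_ne_bot {E : Submodule R M'} (f : M →ₗ[R] M')
    (hE : ∀ N : Submodule R M', N ≠ ⊥ → E ⊓ N ≠ ⊥) (N : Submodule R M) (hN : N ≠ ⊥) :
    E.comap f ⊓ N ≠ ⊥ := by
  obtain ⟨x, hxN, hx0⟩ := (Submodule.ne_bot_iff N).mp hN
  rw [Submodule.ne_bot_iff]
  by_cases hfx : f x = 0
  · exact ⟨x, ⟨by simp [hfx], hxN⟩, hx0⟩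
  -- `E` meets the cyclic submodule `R ∙ f x` in some `r • f x ≠ 0`, and `r • x` does the job.
  have hspan : (R ∙ f x) ≠ ⊥ := by simpa using hfx
  obtain ⟨y, ⟨hyE, hyspan⟩, hy0⟩ := (Submodule.ne_bot_iff _).mp (hE _ hspan)
  obtain ⟨r, rfl⟩ := Submodule.mem_span_singleton.mp hyspan
  refine ⟨r • x, ⟨by simpa using hyE, N.smul_mem r hxN⟩, fun hrx => hy0 ?_⟩
  rw [← map_smul, hrx, map_zero]

theorem IsProperEssential.comap_subtype {E N : Submodule R M} (hE : IsProperEssential E)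
    (hNE : ¬ N ≤ E) : IsProperEssential (E.comap N.subtype) := by
  obtain ⟨-, -, hE⟩ := hE
  have hN : N ≠ ⊥ := fun h => hNE (h ▸ bot_le)
  refine ⟨?_, fun h => hNE (Submodule.comap_subtype_eq_top.mp h), ?_⟩
  · intro h
    apply hE N hN
    rw [inf_comm, ← Submodule.map_comap_subtype, h, Submodule.map_bot]
  · exact Submodule.comap_inf_ne_bot_of_forall_inf_ne_bot N.subtype hE

theorem IsProperEssential.comap_of_surjective {E : Submodule R M'} (hE : IsProperEssential E)
    {f : M →ₗ[R] M'} (hf : Function.Surjective f) : IsProperEssential (E.comap f) := by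
  obtain ⟨hE0, hET, hE⟩ := hE
  have hmap : (E.comap f).map f = E := Submodule.map_comap_eq_of_surjective hf E
  refine ⟨fun h => hE0 ?_, fun h => hET ?_,
    Submodule.comap_inf_ne_bot_of_forall_inf_ne_bot f hE⟩
  · rw [← hmap, h, Submodule.map_bot]
  · rw [← hmap, h, Submodule.map_top, LinearMap.range_eq_top.mpr hf]

theorem DirectSum.IsInternal.isCompl_iSup_ne {ι : Type*} [DecidableEq ι]
    {N : ι → Submodule R M} (h : DirectSum.IsInternal N) (i : ι) :
    IsCompl (N i) (⨆ (j) (_ : j ≠ i), N j) :=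
  ⟨iSupIndep_def.mp h.submodule_iSupIndep i,
    codisjoint_iff.mpr ((iSup_split_single N i).symm.trans h.submodule_iSup_eq_top)⟩

theorem DirectSum.IsInternal.exists_isProperEssential_iff {ι : Type*} [DecidableEq ι]
    {N : ι → Submodule R M} (h : DirectSum.IsInternal N) :
    (∃ E : Submodule R M, IsProperEssential E) ↔
      ∃ i, ∃ E : Submodule R (N i), IsProperEssential E := by
  constructor
  · rintro ⟨E, hE⟩
    obtain ⟨i, hi⟩ : ∃ i, ¬ N i ≤ E := by
      by_contra! hle
      exact hE.2.1 (top_le_iff.mp (h.submodule_iSup_eq_top ▸ iSup_le hle))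
    exact ⟨i, _, hE.comap_subtype hi⟩
  · rintro ⟨i, E, hE⟩
    exact ⟨_, hE.comap_of_surjective (Submodule.projectionOnto_surjective (h.isCompl_iSup_ne i))⟩

end Essential

theorem Submodule.isInternal_torsionBy_of_pairwise_isCoprime {R M ι : Type*} [CommRing R]
    [AddCommGroup M] [Module R M] [Fintype ι] [DecidableEq ι] {q : ι → R}
    (hq : Pairwise (IsCoprime on q)) (hM : Module.IsTorsionBy R M (∏ i, q i)) :
    DirectSum.IsInternal fun i => Submodule.torsionBy R M (q i) := by
  have hq' : ((Finset.univ : Finset ι) : Set ι).Pairwise (IsCoprime on q) :=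
    fun i _ j _ hij => hq hij
  refine DirectSum.isInternal_submodule_of_iSupIndep_of_iSup_eq_top
    (iSupIndep_iff_supIndep_univ.mpr (Submodule.supIndep_torsionBy hq')) ?_
  have hsup := Submodule.iSup_torsionBy_eq_torsionBy_prod (M := M) hq'
  simp only [Finset.mem_univ, iSup_pos] at hsup
  rw [hsup]
  exact (Module.isTorsionBy_iff_torsionBy_eq_top _).mp hM

theorem nonfaithful_pid_decomposition_properEssential_general {R M : Type*} [CommRing R] [IsDomain R]
    [IsPrincipalIdealRing R] [AddCommGroup M] [Module R M] (a : R)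
    (hann : Module.annihilator R M = Ideal.span {a})
    (n : ℕ) (u : R) (hu : IsUnit u) (p : Fin n → R) (hp : ∀ i, Prime (p i))
    (hdist : ∀ i j, i ≠ j → ¬ Associated (p i) (p j))
    (α : Fin n → ℕ)
    (hfac : a = u * ∏ i, p i ^ α i) :
    DirectSum.IsInternal (fun i : Fin n =>
      Submodule.torsionBy R M (p i ^ α i)) ∧
    ((∃ E : Submodule R M, IsProperEssential E) ↔
      ∃ i, ∃ E : Submodule R ↥(Submodule.torsionBy R M (p i ^ α i)),
        IsProperEssential E) := by
  have htorsion : Module.IsTorsionBy R M (∏ i, p i ^ α i) := by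
    rw [Module.isTorsionBy_iff_mem_annihilator, hann, hfac,
      Ideal.span_singleton_mul_left_unit hu]
    exact Ideal.mem_span_singleton_self _
  have hcoprime : Pairwise (IsCoprime on fun i => p i ^ α i) := fun i j hij =>
    ((hp i).coprime_iff_not_dvd.mpr fun hdvd =>
      hdist i j hij ((hp i).associated_of_dvd (hp j) hdvd)).pow
  have hinternal := Submodule.isInternal_torsionBy_of_pairwise_isCoprime hcoprime htorsion
  exact ⟨hinternal, hinternal.exists_isProperEssential_iff⟩

/-- A non-faithful module over a PID whose annihilator is generated by
`a = u * p₁^{α₁} ⋯ p_n^{α_n}` (distinct primes `pᵢ`, unit `u`) is the internal direct sum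
of the submodules `Ann_M(pᵢ^{αᵢ})`, and it has a proper essential submodule iff some
`Ann_M(pᵢ^{αᵢ})` does. -/
theorem nonfaithful_pid_decomposition_properEssential {R M : Type*} [CommRing R] [IsDomain R]
    [IsPrincipalIdealRing R] [AddCommGroup M] [Module R M] (a : R) (ha : a ≠ 0)
    (hann : Module.annihilator R M = Ideal.span {a})
    (n : ℕ) (u : R) (hu : IsUnit u) (p : Fin n → R) (hp : ∀ i, Prime (p i))
    (hdist : ∀ i j, i ≠ j → ¬ Associated (p i) (p j))
    (α : Fin n → ℕ) (hα : ∀ i, 1 ≤ α i)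
    (hfac : a = u * ∏ i, p i ^ α i) :
    DirectSum.IsInternal (fun i : Fin n =>
      Submodule.torsionBy R M (p i ^ α i)) ∧
    ((∃ E : Submodule R M, IsProperEssential E) ↔
      ∃ i, ∃ E : Submodule R ↥(Submodule.torsionBy R M (p i ^ α i)),
        IsProperEssential E) :=
  nonfaithful_pid_decomposition_properEssential_general a hann n u hu p hp hdist α hfac
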